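/- (Dual Pieri-type expansion) In the ring of symmetric functions over ℚ(t), let q_m = Σ_{λ ⊢ m} p_λ / z_λ(t) (so Σ_m q_m z^m = exp(Σ_{n≥1} (1-t^n) p_n z^n / n)), and let q_k^* be the adjoint of multiplication by q_k with respect to the Hall inner product ⟨p_λ, p_μ⟩ = δ_{λμ} z_λ. Then for any partition λ with l parts and any k ≥ 1: q_k^* s_λ = Σ_{τ} (1-t)^{l(τ)} s_{λ-τ}, where τ runs over compositions of k of length ≤ l, l(τ) is the number of nonzero parts of τ, and s_{λ-τ} denotes the (possibly zero or signed) straightened Schur function of the composition λ - τ. -/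

import Mathlib

open Finset MvPolynomial

noncomputable section

/-- The base field `ℚ(t)`. -/
abbrev F : Type := RatFunc ℚ

/-- The indeterminate `t` of `ℚ(t)`. -/
def tq : F := RatFunc.X

/-- The ring of symmetric functions over `ℚ(t)`, modelled as the polynomial
algebra on the power sums: the variable `n` represents the power sum `p_n`. -/
abbrev SymF : Type := MvPolynomial ℕ F

/-- `p_λ = ∏_i p_{λ_i}` for a multiset of parts `λ`. -/
def pPoly (s : Multiset ℕ) : SymF := (s.map fun i => (X i : SymF)).prod

/-- `z_λ = ∏_i i^{m_i(λ)} m_i(λ)!`. -/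
def zNat (s : Multiset ℕ) : ℕ := s.prod * ∏ i ∈ s.toFinset, (s.count i).factorial

/-- The complete homogeneous symmetric function `h_m = ∑_{λ ⊢ m} p_λ / z_λ`. -/
def hh (m : ℕ) : SymF :=
  ∑ lam : m.Partition, ((zNat lam.parts : F))⁻¹ • pPoly lam.parts

/-- `h_m` for integer index, with `h_m = 0` for `m < 0`. -/
def hInt (m : ℤ) : SymF := if m < 0 then 0 else hh m.toNat

/-- The (straightened, possibly zero or signed) Schur function of a tuple
`α ∈ ℤ^l`, via the Jacobi–Trudi determinant `s_α = det(h_{α_i - i + j})`. -/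
def schur {l : ℕ} (α : Fin l → ℤ) : SymF :=
  Matrix.det (Matrix.of fun i j : Fin l => hInt (α i - (i : ℕ) + (j : ℕ)))

/-- The adjoint `q_k^*` of multiplication by `q_k` with respect to the Hall
inner product `⟨p_λ, p_μ⟩ = z_λ δ_{λμ}`: the coefficient of `z^{-k}` in
`exp(∑_{n≥1} (1-t^n)(∂/∂p_n) z^{-n})`, i.e.
`q_k^* = ∑_{λ ⊢ k} (∏_i (1-t^{λ_i}) / ∏_i m_i(λ)!) ∂_λ`. -/
def Dop (t : F) (k : ℕ) : Module.End F SymF :=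
  ∑ lam : k.Partition,
    (((lam.parts.map fun i => 1 - t ^ i).prod) /
        (∏ i ∈ lam.parts.toFinset, ((lam.parts.count i).factorial : F))) •
      (((lam.parts.sort (· ≤ ·)).map fun i =>
        (MvPolynomial.pderiv i : Derivation F SymF SymF).toLinearMap).prod)

/-!
Sending `p_n ↦ p_n + (1 - t^n) u^n` defines a ring homomorphism into power series in `u`, and by
the Leibniz rule `q_k^*(p_n f) = p_n q_k^* f + (1 - t^n) q_{k-n}^* f` the `u^k`-coefficient of the
image of `f` is `q_k^* f`. Hence `q_k^*(f_1 ⋯ f_l) = ∑_{τ ⊨ k} ∏_i q_{τ_i}^* f_i`, and expanding the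
Jacobi–Trudi determinant distributes `q_k^*` over its rows. On a single entry, Newton's identity
`m h_m = ∑_r p_r h_{m-r}` and induction on `m` give `q_c^* h_m = (1 - t) h_{m-c}` for `c ≥ 1`, so
row `i` has its index lowered by `τ_i` and picks up a factor `1 - t` exactly when `τ_i ≠ 0`.
-/

theorem Multiset.prod_factorial_count_cons {α : Type*} [DecidableEq α] (r : α) (s : Multiset α) :
    ∏ i ∈ (r ::ₘ s).toFinset, ((r ::ₘ s).count i).factorial
      = (s.count r + 1) * ∏ i ∈ s.toFinset, (s.count i).factorial := by
  have hsub : s.toFinset ⊆ (r ::ₘ s).toFinset := by simp [Finset.subset_insert]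
  have hr : r ∈ (r ::ₘ s).toFinset := by simp
  rw [Finset.prod_subset (f := fun i => (s.count i).factorial) hsub fun i _ hi => by
    rw [Multiset.count_eq_zero_of_notMem (by simpa using hi), Nat.factorial_zero]]
  rw [← Finset.mul_prod_erase _ _ hr, ← Finset.mul_prod_erase _ _ hr, Multiset.count_cons_self,
    Nat.factorial_succ, mul_assoc]
  congr 2
  exact Finset.prod_congr rfl fun i hi => by
    rw [Multiset.count_cons_of_ne (Finset.ne_of_mem_erase hi)]

theorem Nat.Partition.sum_count_smul_eq {M : Type*} [AddCommMonoid M] {n a : ℕ} (ha1 : 1 ≤ a)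
    (ha : a ≤ n) (g : Multiset ℕ → M) :
    ∑ p : n.Partition, p.parts.count a • g p.parts
      = ∑ q : (n - a).Partition, (q.parts.count a + 1) • g (a ::ₘ q.parts) := by
  classical
  rw [← Finset.sum_filter_of_ne (p := fun p : n.Partition => a ∈ p.parts) fun p _ hp =>
      Multiset.count_ne_zero.mp (left_ne_zero_of_smul hp),
    Finset.sum_subtype (p := fun p : n.Partition => a ∈ p.parts) _ fun p => by simp,
    ← (partitionWithPartEquiv ha1 ha).symm.sum_comp]
  simp

theorem Nat.Partition.sum_count_mul {n : ℕ} (p : n.Partition) :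
    ∑ r ∈ Finset.Icc 1 n, p.parts.count r * r = n := by
  conv_rhs => rw [← p.parts_sum, Finset.sum_multiset_count]
  refine (Finset.sum_subset (fun r hr => ?_) fun r _ hr => ?_).symm.trans
    (Finset.sum_congr rfl fun _ _ => smul_eq_mul _ _)
  · have hr := Multiset.mem_toFinset.mp hr
    exact Finset.mem_Icc.mpr ⟨p.parts_pos hr, p.le_of_mem_parts hr⟩
  · rw [Multiset.count_eq_zero_of_notMem (by simpa using hr), zero_mul]

theorem sum_Icc_one_sub_pow_mul_one_sub {R : Type*} [CommRing R] (t : R) (j : ℕ) :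
    ∑ r ∈ Finset.Icc 1 j, (1 - t ^ r) * (1 - t) = j * (1 - t) - t * (1 - t ^ j) := by
  induction j with
  | zero => simp
  | succ j ih =>
    rw [Finset.sum_Icc_succ_top (by omega), ih]
    push_cast
    ring

theorem sum_Icc_ite_one_sub_pow_mul {R : Type*} [CommRing R] (t : R) {k m : ℕ} (hkm : k ≤ m) :
    ∑ r ∈ Finset.Icc 1 m, (if r ≤ k then (1 - t ^ r) * (if k - r = 0 then 1 else 1 - t) else 0)
      = k * (1 - t) := by
  rw [← Finset.sum_filter, show (Finset.Icc 1 m).filter (· ≤ k) = Finset.Icc 1 k by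
    ext r; simp only [Finset.mem_filter, Finset.mem_Icc]; omega]
  rcases k with _ | j
  · simp
  rw [Finset.sum_Icc_succ_top (by omega), Nat.sub_self, if_pos rfl,
    Finset.sum_congr rfl fun r hr => by rw [if_neg (by have := (Finset.mem_Icc.mp hr).2; omega)],
    sum_Icc_one_sub_pow_mul_one_sub]
  push_cast
  ring

namespace MvPolynomial

variable {R σ : Type*} [CommSemiring R]

theorem pderiv_pderiv_comm (i j : σ) (f : MvPolynomial σ R) :
    pderiv i (pderiv j f) = pderiv j (pderiv i f) := by
  classical
  induction f using MvPolynomial.induction_on with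
  | C a => simp
  | add f g hf hg => simp only [map_add, hf, hg]
  | mul_X f n hf =>
    have hX : ∀ a b, pderiv a (pderiv b (X n : MvPolynomial σ R)) = 0 := by
      intro a b
      rw [pderiv_X]
      by_cases h : b = n
      · subst h; simp
      · simp [Ne.symm h]
    simp only [pderiv_mul, map_add, hf, hX]
    ring

theorem commute_pderiv (i j : σ) :
    Commute (pderiv i : Derivation R (MvPolynomial σ R) (MvPolynomial σ R)).toLinearMap
      (pderiv j).toLinearMap :=
  LinearMap.ext fun f => pderiv_pderiv_comm i j f

def pderivMultiset (s : Multiset σ) : Module.End R (MvPolynomial σ R) :=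
  (s.map fun i => (pderiv i : Derivation R (MvPolynomial σ R) (MvPolynomial σ R)).toLinearMap)
    |>.noncommProd fun _ ha _ hb _ => by
      obtain ⟨i, -, rfl⟩ := Multiset.mem_map.mp ha
      obtain ⟨j, -, rfl⟩ := Multiset.mem_map.mp hb
      exact commute_pderiv i j

@[simp]
theorem pderivMultiset_zero : pderivMultiset (0 : Multiset σ) = (1 : Module.End R _) :=
  Multiset.noncommProd_empty _

theorem pderivMultiset_cons (i : σ) (s : Multiset σ) :
    pderivMultiset (i ::ₘ s) = (pderiv i).toLinearMap * (pderivMultiset s : Module.End R _) := by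
  simp only [pderivMultiset, Multiset.map_cons, Multiset.noncommProd_cons]

theorem pderivMultiset_coe_sort [LinearOrder σ] (s : Multiset σ) :
    ((s.sort (· ≤ ·)).map fun i =>
        (pderiv i : Derivation R (MvPolynomial σ R) (MvPolynomial σ R)).toLinearMap).prod
      = pderivMultiset s := by
  have hs := Multiset.sort_eq s (· ≤ ·)
  generalize s.sort (· ≤ ·) = L at hs ⊢
  subst hs
  simp only [pderivMultiset, Multiset.map_coe, Multiset.noncommProd_coe]

theorem pderivMultiset_C {s : Multiset σ} (hs : s ≠ 0) (a : R) :
    pderivMultiset s (C a : MvPolynomial σ R) = 0 := by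
  induction s using Multiset.induction_on with
  | empty => exact absurd rfl hs
  | cons i s ih =>
    rw [pderivMultiset_cons, Module.End.mul_apply]
    rcases eq_or_ne s 0 with rfl | hs'
    · simp
    · simp [ih hs']

theorem pderivMultiset_X_mul [DecidableEq σ] (s : Multiset σ) (n : σ) (f : MvPolynomial σ R) :
    pderivMultiset s (X n * f)
      = X n * pderivMultiset s f + s.count n • pderivMultiset (s.erase n) f := by
  induction s using Multiset.induction_on with
  | empty => simp
  | cons i s ih =>
    simp only [pderivMultiset_cons, Module.End.mul_apply, ih, map_add, map_nsmul]
    simp only [Derivation.coeFn_coe, pderiv_mul]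
    rcases eq_or_ne i n with rfl | hin
    · have hcount : s.count i • pderiv i (pderivMultiset (s.erase i) f)
          = s.count i • pderivMultiset s f := by
        by_cases hi : i ∈ s
        · rw [← Derivation.coeFn_coe, ← Module.End.mul_apply, ← pderivMultiset_cons,
            Multiset.cons_erase hi]
        · simp [Multiset.count_eq_zero_of_notMem hi]
      rw [add_assoc, hcount, pderiv_X_self, one_mul, Multiset.count_cons_self,
        Multiset.erase_cons_head, add_smul, one_smul]
      abel
    · rw [pderiv_X_of_ne hin.symm, zero_mul, zero_add, Multiset.count_cons_of_ne hin.symm,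
        Multiset.erase_cons_tail s hin, pderivMultiset_cons, Module.End.mul_apply,
        Derivation.coeFn_coe]

end MvPolynomial

def dopWeight (t : F) (s : Multiset ℕ) : F :=
  (s.map fun i => 1 - t ^ i).prod / ∏ i ∈ s.toFinset, ((s.count i).factorial : F)

theorem dopWeight_cons (t : F) (r : ℕ) (s : Multiset ℕ) :
    (s.count r + 1 : F) * dopWeight t (r ::ₘ s) = (1 - t ^ r) * dopWeight t s := by
  have hfact : ∏ i ∈ (r ::ₘ s).toFinset, (((r ::ₘ s).count i).factorial : F)
      = (s.count r + 1) * ∏ i ∈ s.toFinset, ((s.count i).factorial : F) := by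
    exact_mod_cast Multiset.prod_factorial_count_cons r s
  have hne : ∏ i ∈ s.toFinset, ((s.count i).factorial : F) ≠ 0 :=
    Finset.prod_ne_zero_iff.mpr fun i _ => Nat.cast_ne_zero.mpr (Nat.factorial_ne_zero _)
  have hc : (s.count r + 1 : F) ≠ 0 := Nat.cast_add_one_ne_zero _
  rw [dopWeight, dopWeight, Multiset.map_cons, Multiset.prod_cons, hfact]
  field_simp

theorem Dop_eq_sum (t : F) (k : ℕ) :
    Dop t k = ∑ p : k.Partition, dopWeight t p.parts • pderivMultiset p.parts := by
  simp only [Dop, dopWeight, pderivMultiset_coe_sort]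

theorem Dop_zero (t : F) : Dop t 0 = 1 := by
  simp [Dop_eq_sum, dopWeight]

theorem Dop_C (t : F) {k : ℕ} (hk : k ≠ 0) (a : F) : Dop t k (C a) = 0 := by
  rw [Dop_eq_sum, LinearMap.sum_apply]
  refine Finset.sum_eq_zero fun p _ => ?_
  have hp : p.parts ≠ 0 := fun h => hk (by simpa [h] using p.parts_sum.symm)
  rw [LinearMap.smul_apply, pderivMultiset_C hp, smul_zero]

theorem Dop_X_mul (t : F) (k n : ℕ) (f : SymF) :
    Dop t k (X n * f)
      = X n * Dop t k f + if n ≤ k then (1 - t ^ n) • Dop t (k - n) f else 0 := by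
  simp only [Dop_eq_sum t k, LinearMap.sum_apply, LinearMap.smul_apply, pderivMultiset_X_mul,
    smul_add, ← mul_smul_comm, Finset.sum_add_distrib, ← Finset.mul_sum]
  congr 1
  by_cases hn : 1 ≤ n ∧ n ≤ k
  · rw [if_pos hn.2, Dop_eq_sum, LinearMap.sum_apply, Finset.smul_sum]
    simp_rw [smul_comm (dopWeight t _) (Multiset.count n _)]
    rw [Nat.Partition.sum_count_smul_eq hn.1 hn.2 fun s =>
      dopWeight t s • pderivMultiset (s.erase n) f]
    refine Finset.sum_congr rfl fun q _ => ?_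
    rw [Multiset.erase_cons_head, ← Nat.cast_smul_eq_nsmul F, smul_smul, Nat.cast_add_one,
      dopWeight_cons, mul_smul, LinearMap.smul_apply]
  · have hcount : ∀ p : k.Partition, p.parts.count n = 0 := fun p =>
      Multiset.count_eq_zero_of_notMem fun h => hn ⟨p.parts_pos h, p.le_of_mem_parts h⟩
    simp only [hcount, zero_smul, smul_zero, Finset.sum_const_zero]
    split_ifs with h
    · simp [show n = 0 by omega]
    · rfl

def powerSumShift (t : F) : SymF →ₐ[F] PowerSeries SymF :=
  aeval fun n => PowerSeries.C (X n) + PowerSeries.C (C (1 - t ^ n)) * PowerSeries.X ^ n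

theorem coeff_powerSumShift (t : F) (k : ℕ) (f : SymF) :
    PowerSeries.coeff k (powerSumShift t f) = Dop t k f := by
  induction f using MvPolynomial.induction_on generalizing k with
  | C a =>
    rw [powerSumShift, aeval_C, PowerSeries.algebraMap_apply, PowerSeries.coeff_C]
    split_ifs with hk
    · simp [hk, Dop_zero]
    · exact (Dop_C t hk a).symm
  | add f g hf hg => simp only [map_add, hf, hg]
  | mul_X f n hf =>
    rw [mul_comm, Dop_X_mul, map_mul, powerSumShift, aeval_X, ← powerSumShift, add_mul, map_add,
      PowerSeries.coeff_C_mul, hf, mul_assoc, PowerSeries.coeff_C_mul,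
      PowerSeries.coeff_X_pow_mul']
    split_ifs
    · rw [hf, smul_eq_C_mul]
    · rw [mul_zero]

theorem Dop_prod (t : F) {l : ℕ} (k : ℕ) (f : Fin l → SymF) :
    Dop t k (∏ i, f i) = ∑ τ ∈ Finset.Nat.antidiagonalTuple l k, ∏ i, Dop t (τ i) (f i) := by
  classical
  rw [← coeff_powerSumShift, map_prod, PowerSeries.coeff_prod, finsuppAntidiag, Finset.sum_map,
    ← piAntidiag_univ_fin_eq_antidiagonalTuple, ← Finset.sum_attach (piAntidiag _ _)]
  simp [coeff_powerSumShift]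

theorem Dop_det (t : F) {l : ℕ} (k : ℕ) (M : Matrix (Fin l) (Fin l) SymF) :
    Dop t k M.det = ∑ τ ∈ Finset.Nat.antidiagonalTuple l k,
      (Matrix.of fun i j => Dop t (τ i) (M i j)).det := by
  simp only [← Matrix.det_transpose M, ← Matrix.det_transpose (Matrix.of _), Matrix.det_apply,
    map_sum, Units.smul_def, map_zsmul, Dop_prod, Finset.smul_sum, Matrix.transpose_apply,
    Matrix.of_apply]
  exact Finset.sum_comm

theorem zNat_cons (r : ℕ) (s : Multiset ℕ) :
    zNat (r ::ₘ s) = r * (s.count r + 1) * zNat s := by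
  rw [zNat, zNat, Multiset.prod_cons, Multiset.prod_factorial_count_cons]
  ring

theorem zNat_ne_zero {s : Multiset ℕ} (hs : ∀ i ∈ s, 0 < i) : zNat s ≠ 0 :=
  Nat.mul_ne_zero (Multiset.prod_pos hs).ne'
    (Finset.prod_ne_zero_iff.mpr fun _ _ => Nat.factorial_ne_zero _)

theorem hh_zero : hh 0 = 1 := by
  simp [hh, zNat, pPoly]

theorem smul_hh_eq_sum (m : ℕ) :
    (m : F) • hh m = ∑ r ∈ Finset.Icc 1 m, X r * hh (m - r) := by
  have hcons : ∀ r ∈ Finset.Icc 1 m, ∀ q : (m - r).Partition,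
      (q.parts.count r + 1) •
          ((r : F) • ((zNat (r ::ₘ q.parts) : F)⁻¹ • pPoly (r ::ₘ q.parts)))
        = X r * ((zNat q.parts : F)⁻¹ • pPoly q.parts) := by
    intro r hr q
    have hr : (r : F) ≠ 0 := Nat.cast_ne_zero.mpr (by have := (Finset.mem_Icc.mp hr).1; omega)
    have hq : (zNat q.parts : F) ≠ 0 := Nat.cast_ne_zero.mpr (zNat_ne_zero fun _ => q.parts_pos)
    have hc : (q.parts.count r + 1 : F) ≠ 0 := Nat.cast_add_one_ne_zero _
    rw [pPoly, Multiset.map_cons, Multiset.prod_cons, ← pPoly, mul_smul_comm,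
      ← Nat.cast_smul_eq_nsmul F, smul_smul, smul_smul, zNat_cons]
    congr 2
    push_cast
    field_simp
  calc (m : F) • hh m
      = ∑ p : m.Partition, ∑ r ∈ Finset.Icc 1 m,
          p.parts.count r • ((r : F) • ((zNat p.parts : F)⁻¹ • pPoly p.parts)) := by
        rw [hh, Finset.smul_sum]
        refine Finset.sum_congr rfl fun p _ => ?_
        rw [← congrArg (Nat.cast (R := F)) p.sum_count_mul]
        simp only [Nat.cast_sum, Nat.cast_mul, Finset.sum_smul, mul_smul, Nat.cast_smul_eq_nsmul]
    _ = ∑ r ∈ Finset.Icc 1 m, ∑ q : (m - r).Partition,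
          (q.parts.count r + 1) •
            ((r : F) • ((zNat (r ::ₘ q.parts) : F)⁻¹ • pPoly (r ::ₘ q.parts))) := by
        rw [Finset.sum_comm]
        refine Finset.sum_congr rfl fun r hr => ?_
        obtain ⟨hr1, hrm⟩ := Finset.mem_Icc.mp hr
        exact Nat.Partition.sum_count_smul_eq hr1 hrm fun s =>
          (r : F) • ((zNat s : F)⁻¹ • pPoly s)
    _ = ∑ r ∈ Finset.Icc 1 m, X r * hh (m - r) := by
        refine Finset.sum_congr rfl fun r hr => ?_
        rw [hh, Finset.mul_sum]
        exact Finset.sum_congr rfl fun q _ => hcons r hr q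

theorem hInt_natCast (m : ℕ) : hInt m = hh m := by
  simp [hInt]

theorem hInt_of_neg {e : ℤ} (he : e < 0) : hInt e = 0 :=
  if_pos he

theorem sum_X_mul_hInt_sub {m : ℕ} {e : ℤ} (he : e ≤ m) :
    ∑ r ∈ Finset.Icc 1 m, X r * hInt (e - r) = (e : F) • hInt e := by
  rcases lt_or_ge e 0 with hneg | hnonneg
  · rw [hInt_of_neg hneg, smul_zero]
    exact Finset.sum_eq_zero fun r hr => by
      rw [hInt_of_neg (by have := (Finset.mem_Icc.mp hr).1; omega), mul_zero]
  lift e to ℕ using hnonneg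
  have hem : e ≤ m := by exact_mod_cast he
  rw [hInt_natCast, Int.cast_natCast, smul_hh_eq_sum, ← Finset.sum_subset
    (Finset.Icc_subset_Icc_right hem) fun r hr hre => by
      rw [hInt_of_neg (by simp only [Finset.mem_Icc] at hr hre; omega), mul_zero]]
  refine Finset.sum_congr rfl fun r hr => ?_
  rw [← hInt_natCast, Nat.cast_sub (Finset.mem_Icc.mp hr).2]

theorem Dop_hh (t : F) (m k : ℕ) :
    Dop t k (hh m) = (if k = 0 then 1 else 1 - t) • hInt ((m : ℤ) - k) := by
  induction m using Nat.strong_induction_on generalizing k with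
  | _ m ih =>
  rcases eq_or_ne k 0 with rfl | hk
  · simp [Dop_zero, hInt_natCast]
  rw [if_neg hk]
  rcases eq_or_ne m 0 with rfl | hm
  · rw [hh_zero, ← C_1, Dop_C t hk, hInt_of_neg (by omega), smul_zero]
  have hterm : ∀ r ∈ Finset.Icc 1 m, Dop t k (X r * hh (m - r))
      = (1 - t) • (X r * hInt ((m - k : ℤ) - r))
        + (if r ≤ k then (1 - t ^ r) * (if k - r = 0 then 1 else 1 - t) else 0) •
            hInt ((m : ℤ) - k) := by
    intro r hr
    obtain ⟨hr1, hrm⟩ := Finset.mem_Icc.mp hr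
    rw [Dop_X_mul, ih (m - r) (by omega), if_neg hk, mul_smul_comm, Nat.cast_sub hrm,
      sub_sub, add_comm (r : ℤ), ← sub_sub]
    by_cases hrk : r ≤ k
    · rw [if_pos hrk, if_pos hrk, ih (m - r) (by omega), smul_smul, Nat.cast_sub hrm,
        Nat.cast_sub hrk, sub_sub_sub_cancel_right]
    · rw [if_neg hrk, if_neg hrk, zero_smul]
  refine smul_right_injective SymF (Nat.cast_ne_zero.mpr hm : (m : F) ≠ 0) ?_
  calc (m : F) • Dop t k (hh m)
      = ∑ r ∈ Finset.Icc 1 m, Dop t k (X r * hh (m - r)) := by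
        rw [← map_smul, smul_hh_eq_sum, map_sum]
    _ = ((1 - t) * ((m : ℤ) - k : ℤ) + k * (1 - t)) • hInt ((m : ℤ) - k) := by
        rw [Finset.sum_congr rfl hterm, Finset.sum_add_distrib, ← Finset.smul_sum,
          ← Finset.sum_smul, sum_X_mul_hInt_sub (by omega), smul_smul, add_smul]
        congr 1
        rcases le_or_gt k m with hkm | hkm
        · rw [sum_Icc_ite_one_sub_pow_mul t hkm]
        · rw [hInt_of_neg (by omega), smul_zero, smul_zero]
    _ = (m : F) • (1 - t) • hInt ((m : ℤ) - k) := by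
        rw [smul_smul]
        congr 1
        push_cast
        ring

theorem Dop_hInt (t : F) (k : ℕ) (e : ℤ) :
    Dop t k (hInt e) = (if k = 0 then 1 else 1 - t) • hInt (e - k) := by
  rcases lt_or_ge e 0 with he | he
  · rw [hInt_of_neg he, map_zero, hInt_of_neg (by omega), smul_zero]
  lift e to ℕ using he
  rw [hInt_natCast, Dop_hh]

theorem qstar_schur_general (l k : ℕ) (lam : Fin l → ℕ) :
    Dop tq k (schur fun i => (lam i : ℤ))
      = ∑ τ ∈ Finset.Nat.antidiagonalTuple l k,
          ((1 - tq) ^ (Finset.univ.filter fun j => τ j ≠ 0).card) •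
            schur (fun i => (lam i : ℤ) - (τ i : ℤ)) := by
  rw [schur, Dop_det]
  refine Finset.sum_congr rfl fun τ _ => ?_
  have hentry : ∀ i j : Fin l, Dop tq (τ i) (hInt ((lam i : ℤ) - (i : ℕ) + (j : ℕ)))
      = C (if τ i = 0 then 1 else 1 - tq) * hInt ((lam i : ℤ) - τ i - (i : ℕ) + (j : ℕ)) := by
    intro i j
    rw [Dop_hInt, smul_eq_C_mul]
    ring_nf
  have hdet := Matrix.det_mul_column (fun i => C (if τ i = 0 then 1 else 1 - tq))
    (Matrix.of fun i j : Fin l => hInt ((lam i : ℤ) - τ i - (i : ℕ) + (j : ℕ)))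
  simp only [Matrix.of_apply] at hdet ⊢
  simp only [hentry]
  rw [hdet, ← map_prod, ← smul_eq_C_mul, schur]
  simp [Finset.prod_ite]

/-- dual Pieri-type expansion: for a partition `λ` with `l` parts
and `k ≥ 1`, `q_k^* s_λ = ∑_{τ ⊨ k, l(τ) ≤ l} (1-t)^{l(τ)} s_{λ-τ}`, where `τ`
runs over all tuples of `l` nonnegative integers summing to `k`, `l(τ)` is the
number of nonzero entries of `τ`, and `s_{λ-τ}` is the straightened Schur
function of the tuple `λ - τ`. -/
theorem qstar_schur (l k : ℕ) (hk : 1 ≤ k) (lam : Fin l → ℕ)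
    (hpos : ∀ i, 0 < lam i) (hanti : Antitone lam) :
    Dop tq k (schur fun i => (lam i : ℤ))
      = ∑ τ ∈ Finset.Nat.antidiagonalTuple l k,
          ((1 - tq) ^ (Finset.univ.filter fun j => τ j ≠ 0).card) •
            schur (fun i => (lam i : ℤ) - (τ i : ℤ)) :=
  qstar_schur_general l k lam

end
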